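/- Let {Zᵢ}_{i∈ℐ_p} be mutually independent discrete random variables on a finite set 𝒵, let ℓ(h,·) be bounded by b, and let α be a probability vector over ℐ_p. Then the 'distributed learning discrepancy' satisfies |Σ_{z∈𝒵^{ℐ_p}} P_{Z^{ℐ_p}}(z)·Σ_{i∈ℐ_p} αᵢ·ℓ(h,zᵢ)·log(1/P_{Z^{ℐ_p}}(z)) − Σ_{i∈ℐ_p} αᵢ·Σ_{zᵢ∈𝒵} P_{Zᵢ}(zᵢ)·ℓ(h,zᵢ)·log(1/P_{Zᵢ}(zᵢ))| ≤ b·H(Z^{ℐ_p}) − b·Σ_{i∈ℐ_p} αᵢ·H(Zᵢ). -/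

import Mathlib

/-!
Under the product law `P z = ∏ i, p i (z i)` we have `log (1 / P z) = ∑ j, log (1 / p j (z j))`,
and by independence `ℓ (z i)` is uncorrelated with every summand with `j ≠ i`. Hence the joint
term equals `∑ i, α i * (Qᵢ + Lᵢ * ∑ j ≠ i, Hⱼ)`, where `Qᵢ` is the marginal term, `Lᵢ ∈ [0, b]`
the expected loss and `Hⱼ ≥ 0` the marginal entropies, while `H(Z) = ∑ j, Hⱼ`. The discrepancy
is therefore `∑ i, α i * Lᵢ * ∑ j ≠ i, Hⱼ`, which lies between `0` and
`b * ∑ i, α i * (H(Z) - Hᵢ)`.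
-/

open Finset Real

theorem prod_mul_log_one_div_prod {ι : Type*} (s : Finset ι) (g : ι → ℝ) :
    (∏ i ∈ s, g i) * log (1 / ∏ i ∈ s, g i) = (∏ i ∈ s, g i) * ∑ i ∈ s, log (1 / g i) := by
  by_cases h : ∏ i ∈ s, g i = 0
  · simp [h]
  · simp only [one_div, log_inv, sum_neg_distrib,
      log_prod fun i hi => prod_ne_zero_iff.mp h i hi]

section ProductWeights

variable {ι Z : Type*} [Fintype ι] [DecidableEq ι] [Fintype Z] (p : ι → Z → ℝ)

theorem sum_prod_mul_prod (f : ι → Z → ℝ) :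
    ∑ z : ι → Z, (∏ i, p i (z i)) * ∏ i, f i (z i) = ∏ i, ∑ x, p i x * f i x := by
  rw [Fintype.prod_sum]
  exact sum_congr rfl fun z _ => prod_mul_distrib.symm

theorem sum_prod_mul_prod_finset (hp : ∀ i, ∑ x, p i x = 1) (s : Finset ι) (f : ι → Z → ℝ) :
    ∑ z : ι → Z, (∏ i, p i (z i)) * ∏ i ∈ s, f i (z i) = ∏ i ∈ s, ∑ x, p i x * f i x := by
  have hext : ∀ z : ι → Z,
      ∏ i ∈ s, f i (z i) = ∏ i, (if i ∈ s then f i else fun _ => 1) (z i) := fun z => by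
    rw [← Fintype.prod_extend_by_one]
    exact prod_congr rfl fun i _ => by split_ifs <;> rfl
  simp_rw [hext, sum_prod_mul_prod, ← Fintype.prod_extend_by_one s]
  refine prod_congr rfl fun i _ => ?_
  split_ifs
  · rfl
  · simp [hp i]

theorem sum_prod_mul_apply (hp : ∀ i, ∑ x, p i x = 1) (i : ι) (A : Z → ℝ) :
    ∑ z : ι → Z, (∏ k, p k (z k)) * A (z i) = ∑ x, p i x * A x := by
  simpa using sum_prod_mul_prod_finset p hp {i} fun _ => A

theorem sum_prod_mul_apply_mul_apply (hp : ∀ i, ∑ x, p i x = 1) {i j : ι} (hij : i ≠ j)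
    (A B : Z → ℝ) :
    ∑ z : ι → Z, (∏ k, p k (z k)) * (A (z i) * B (z j))
      = (∑ x, p i x * A x) * ∑ x, p j x * B x := by
  have h := sum_prod_mul_prod_finset p hp {i, j} fun k => if k = i then A else B
  simp only [prod_pair hij, if_pos, if_neg hij.symm] at h
  exact h

theorem sum_prod_mul_log_one_div_prod (hp : ∀ i, ∑ x, p i x = 1) :
    ∑ z : ι → Z, (∏ i, p i (z i)) * log (1 / ∏ i, p i (z i))
      = ∑ j, ∑ x, p j x * log (1 / p j x) := by
  simp_rw [prod_mul_log_one_div_prod, mul_sum]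
  rw [sum_comm]
  exact sum_congr rfl fun j _ => sum_prod_mul_apply p hp j fun x => log (1 / p j x)

theorem sum_prod_mul_apply_mul_log_one_div_prod (hp : ∀ i, ∑ x, p i x = 1) (i : ι) (A : Z → ℝ) :
    ∑ z : ι → Z, (∏ k, p k (z k)) * A (z i) * log (1 / ∏ k, p k (z k))
      = ∑ x, p i x * A x * log (1 / p i x)
        + (∑ x, p i x * A x) * ∑ j ∈ univ.erase i, ∑ x, p j x * log (1 / p j x) := by
  have hsplit : ∀ z : ι → Z, (∏ k, p k (z k)) * A (z i) * log (1 / ∏ k, p k (z k))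
      = ∑ j, (∏ k, p k (z k)) * (A (z i) * log (1 / p j (z j))) := fun z => by
    rw [mul_right_comm, prod_mul_log_one_div_prod, mul_assoc, sum_mul, mul_sum]
    simp_rw [mul_comm (log _)]
  simp_rw [hsplit]
  rw [sum_comm, ← add_sum_erase _ _ (mem_univ i), mul_sum]
  congr 1
  · simp_rw [mul_assoc]
    exact sum_prod_mul_apply p hp i fun x => A x * log (1 / p i x)
  · exact sum_congr rfl fun j hj =>
      sum_prod_mul_apply_mul_apply p hp (ne_of_mem_erase hj).symm A fun x => log (1 / p j x)

theorem sum_prod_mul_sum_mul_log_one_div_prod (hp : ∀ i, ∑ x, p i x = 1) (α : ι → ℝ)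
    (ℓ : Z → ℝ) :
    ∑ z : ι → Z, (∏ i, p i (z i)) * (∑ i, α i * ℓ (z i)) * log (1 / ∏ i, p i (z i))
      = ∑ i, α i * (∑ x, p i x * ℓ x * log (1 / p i x)
        + (∑ x, p i x * ℓ x) * ∑ j ∈ univ.erase i, ∑ x, p j x * log (1 / p j x)) := by
  simp_rw [← sum_prod_mul_apply_mul_log_one_div_prod p hp, mul_sum, sum_mul]
  rw [sum_comm]
  exact sum_congr rfl fun i _ => sum_congr rfl fun z _ => by ring

end ProductWeights

theorem mul_log_one_div_nonneg {x : ℝ} (h0 : 0 ≤ x) (h1 : x ≤ 1) : 0 ≤ x * log (1 / x) := by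
  simpa [negMulLog, one_div, log_inv] using negMulLog_nonneg h0 h1

theorem abs_sum_mul_add_mul_sub_le {ι : Type*} (s : Finset ι) {α Q L D : ι → ℝ} {b : ℝ}
    (hα : ∀ i, 0 ≤ α i) (hL0 : ∀ i, 0 ≤ L i) (hLb : ∀ i, L i ≤ b) (hD : ∀ i, 0 ≤ D i) :
    |∑ i ∈ s, α i * (Q i + L i * D i) - ∑ i ∈ s, α i * Q i| ≤ b * ∑ i ∈ s, α i * D i := by
  have hdiff : ∑ i ∈ s, α i * (Q i + L i * D i) - ∑ i ∈ s, α i * Q i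
      = ∑ i ∈ s, α i * (L i * D i) := by
    rw [← sum_sub_distrib]
    exact sum_congr rfl fun i _ => by ring
  rw [hdiff, abs_of_nonneg (sum_nonneg fun i _ => mul_nonneg (hα i) (mul_nonneg (hL0 i) (hD i))),
    mul_sum]
  exact sum_le_sum fun i _ => by nlinarith [mul_le_mul_of_nonneg_right (hLb i) (hD i), hα i]

/-- Distributed learning discrepancy: the gap between the joint self-information weighted
risk and the weighted marginal self-information weighted risks for independent
participating sources. -/
theorem stmt_7 {ι Z : Type*} [Fintype ι] [DecidableEq ι] [Fintype Z]
    (p : ι → Z → ℝ) (hp : ∀ i z, 0 ≤ p i z) (hpsum : ∀ i, ∑ z, p i z = 1)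
    (ℓ : Z → ℝ) (b : ℝ) (hl0 : ∀ z, 0 ≤ ℓ z) (hlb : ∀ z, ℓ z ≤ b)
    (α : ι → ℝ) (hα : ∀ i, 0 ≤ α i) (hαsum : ∑ i, α i = 1) :
    |(∑ z : ι → Z, (∏ i, p i (z i)) * (∑ i, α i * ℓ (z i)) *
        Real.log (1 / ∏ i, p i (z i)))
      - ∑ i, α i * ∑ zi, p i zi * ℓ zi * Real.log (1 / p i zi)|
    ≤ b * (∑ z : ι → Z, (∏ i, p i (z i)) * Real.log (1 / ∏ i, p i (z i)))
      - b * ∑ i, α i * ∑ zi, p i zi * Real.log (1 / p i zi) := by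
  have hp1 : ∀ i x, p i x ≤ 1 := fun i x =>
    hpsum i ▸ single_le_sum (fun y _ => hp i y) (mem_univ x)
  have hLb : ∀ i, ∑ x, p i x * ℓ x ≤ b := fun i => by
    calc ∑ x, p i x * ℓ x ≤ ∑ x, p i x * b :=
          sum_le_sum fun x _ => mul_le_mul_of_nonneg_left (hlb x) (hp i x)
      _ = b := by rw [← sum_mul, hpsum i, one_mul]
  rw [sum_prod_mul_sum_mul_log_one_div_prod p hpsum, sum_prod_mul_log_one_div_prod p hpsum]
  calc _ ≤ b * ∑ i, α i * ∑ j ∈ univ.erase i, ∑ x, p j x * log (1 / p j x) :=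
        abs_sum_mul_add_mul_sub_le univ hα
          (fun i => sum_nonneg fun x _ => mul_nonneg (hp i x) (hl0 x)) hLb
          (fun i => sum_nonneg fun j _ => sum_nonneg fun x _ =>
            mul_log_one_div_nonneg (hp j x) (hp1 j x))
    _ = _ := by
        simp_rw [sum_erase_eq_sub (mem_univ _), mul_sub, sum_sub_distrib, ← sum_mul, hαsum]
        ring
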